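/- Von Neumann's trace inequality: for all X, Y ∈ ℝ^{n×t} with n ≤ t, the Frobenius inner product satisfies tr(XYᵀ) ≤ Σᵢ σᵢ(X)σᵢ(Y), where σᵢ are the singular values in non-increasing order. Consequently ‖X − Y‖ ≥ ‖σ(X) − σ(Y)‖ in Frobenius/Euclidean norms. -/

import Mathlib

open scoped RealInnerProductSpace
open Matrix
open MeasureTheory

noncomputable section

/-- The normal space to `S` at `x`: the orthogonal complement of the tangent cone. -/
def NormalAt {E : Type*} [NormedAddCommGroup E] [InnerProductSpace ℝ E]
    (S : Set E) (x : E) : Set E :=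
  {v | ∀ w ∈ tangentConeAt ℝ S x, ⟪v, w⟫ = 0}

/-- `x` is a C²-smooth point of `S`: near `x`, `S` is the regular zero set of a C² map. -/
def SmoothPt {E : Type*} [NormedAddCommGroup E] [NormedSpace ℝ E]
    (S : Set E) (x : E) : Prop :=
  x ∈ S ∧ ∃ (U : Set E) (k : ℕ) (f : E → EuclideanSpace ℝ (Fin k)),
    IsOpen U ∧ x ∈ U ∧ ContDiffOn ℝ 2 f U ∧
    (∀ z ∈ U, Function.Surjective (fderivWithin ℝ f U z)) ∧
    S ∩ U = {z ∈ U | f z = 0}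

/-- ED critical point of `y` on `S`. -/
def EDCritPt {E : Type*} [NormedAddCommGroup E] [InnerProductSpace ℝ E]
    (S : Set E) (y x : E) : Prop :=
  SmoothPt S x ∧ (y - x) ∈ NormalAt S x

/-- Metric projection of `y` onto `S`. -/
def projSet {E : Type*} [NormedAddCommGroup E] (S : Set E) (y : E) : Set E :=
  {x ∈ S | dist y x = Metric.infDist y S}

/-- Matrices viewed as Euclidean space (Frobenius norm). -/
def toEuc {n t : ℕ} (X : Matrix (Fin n) (Fin t) ℝ) : EuclideanSpace ℝ (Fin n × Fin t) :=
  WithLp.toLp 2 (fun p => X p.1 p.2)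

/-- Rectangular diagonal matrix. -/
def diagRect {n t : ℕ} (x : Fin n → ℝ) : Matrix (Fin n) (Fin t) ℝ :=
  fun i j => if (j : ℕ) = (i : ℕ) then x i else 0

/-- Singular values of a rectangular matrix, in non-increasing order. -/
def singvals {n t : ℕ} (X : Matrix (Fin n) (Fin t) ℝ) : EuclideanSpace ℝ (Fin n) :=
  let g : Fin n → ℝ := fun j =>
    Real.sqrt ((Matrix.isHermitian_mul_conjTranspose_self X).eigenvalues j)
  WithLp.toLp 2 (fun i => g (Tuple.sort (fun j => -g j) i))

/-- A vector of signs. -/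
def IsSignFn {n : ℕ} (ε : Fin n → ℝ) : Prop := ∀ i, ε i = 1 ∨ ε i = -1

/-- Absolutely symmetric set: invariant under all signed permutations of coordinates. -/
def AbsSymm {n : ℕ} (S : Set (EuclideanSpace ℝ (Fin n))) : Prop :=
  ∀ (π : Equiv.Perm (Fin n)) (ε : Fin n → ℝ), IsSignFn ε →
    ∀ x : EuclideanSpace ℝ (Fin n), x ∈ S ↔ (WithLp.toLp 2 (fun i => ε i * x (π i)) : EuclideanSpace ℝ (Fin n)) ∈ S

/-- Orthogonally invariant set of matrices. -/
def OrthInv {n t : ℕ} (M : Set (Matrix (Fin n) (Fin t) ℝ)) : Prop :=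
  ∀ (U : Matrix (Fin n) (Fin n) ℝ) (V : Matrix (Fin t) (Fin t) ℝ),
    U * Uᵀ = 1 → V * Vᵀ = 1 → (fun X => U * X * Vᵀ) '' M = M

/-- Projection onto a set of matrices in Frobenius norm. -/
def matProj {n t : ℕ} (A : Set (Matrix (Fin n) (Fin t) ℝ)) (Y : Matrix (Fin n) (Fin t) ℝ) :
    Set (Matrix (Fin n) (Fin t) ℝ) :=
  {X ∈ A | dist (toEuc Y) (toEuc X) = Metric.infDist (toEuc Y) (toEuc '' A)}

/-- ED critical point in matrix space (with Frobenius inner product). -/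
def MatEDCritPt {n t : ℕ} (M : Set (Matrix (Fin n) (Fin t) ℝ))
    (Y X : Matrix (Fin n) (Fin t) ℝ) : Prop :=
  EDCritPt (toEuc '' M) (toEuc Y) (toEuc X)

/-! Write `X = Σᵢ σᵢ uᵢ vᵢᵀ` and `Y = Σₖ τₖ u'ₖ v'ₖᵀ` (singular value decompositions), so
that `tr(XYᵀ) = Σᵢₖ σᵢ τₖ ⟪uᵢ, u'ₖ⟫ ⟪vᵢ, v'ₖ⟫`. By AM–GM this is at most the mean of
`Σᵢₖ σᵢ τₖ ⟪uᵢ, u'ₖ⟫²` and `Σᵢₖ σᵢ τₖ ⟪vᵢ, v'ₖ⟫²`. The squared inner products between two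
orthonormal bases form a doubly stochastic matrix `M`, and Birkhoff's theorem together with the
rearrangement inequality gives `Σᵢₖ σᵢ τₖ Mᵢₖ ≤ Σᵢ σᵢ τᵢ` for similarly ordered `σ`, `τ`. The
right singular vectors form a basis of `ℝᵗ`, so there `σ` and `τ` are padded with zeros, which
keeps them similarly ordered. The distance bound then follows by expanding both squared
distances, since `‖X‖_F² = Σᵢ σᵢ²`. -/

open Module Function

theorem sum_mul_mul_le_of_mem_doublyStochastic {ι : Type*} [Fintype ι] [DecidableEq ι]
    {f g : ι → ℝ} (hfg : Monovary f g) {M : Matrix ι ι ℝ} (hM : M ∈ doublyStochastic ℝ ι) :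
    ∑ i, ∑ j, f i * g j * M i j ≤ ∑ i, f i * g i := by
  rw [← SetLike.mem_coe, doublyStochastic_eq_convexHull_permMatrix] at hM
  have hlin : IsLinearMap ℝ fun A : Matrix ι ι ℝ => ∑ i, ∑ j, f i * g j * A i j := by
    refine ⟨fun A B => by simp [mul_add, Finset.sum_add_distrib], fun c A => ?_⟩
    simp only [Matrix.smul_apply, smul_eq_mul, Finset.mul_sum]
    exact Finset.sum_congr rfl fun _ _ => Finset.sum_congr rfl fun _ _ => by ring
  refine convexHull_min ?_ (convex_halfSpace_le hlin _) hM
  rintro _ ⟨σ, rfl⟩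
  simpa [Equiv.Perm.permMatrix, PEquiv.toMatrix_apply] using hfg.sum_mul_comp_perm_le_sum_mul

section OrthonormalBasis

variable {ι E : Type*} [Fintype ι] [NormedAddCommGroup E] [InnerProductSpace ℝ E]

theorem OrthonormalBasis.inner_sq_mem_doublyStochastic [DecidableEq ι]
    (u v : OrthonormalBasis ι ℝ E) :
    Matrix.of (fun i j => ⟪u i, v j⟫ ^ 2) ∈ doublyStochastic ℝ ι :=
  mem_doublyStochastic_iff_sum.2 ⟨fun _ _ => sq_nonneg _,
    fun _ => by simp [v.sum_sq_inner_left], fun _ => by simp [u.sum_sq_inner_right]⟩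

theorem OrthonormalBasis.sum_mul_mul_inner_sq_le {f g : ι → ℝ} (hfg : Monovary f g)
    (u v : OrthonormalBasis ι ℝ E) :
    ∑ i, ∑ j, f i * g j * ⟪u i, v j⟫ ^ 2 ≤ ∑ i, f i * g i := by
  classical
  exact sum_mul_mul_le_of_mem_doublyStochastic hfg (u.inner_sq_mem_doublyStochastic v)

theorem OrthonormalBasis.sum_mul_mul_inner_comp_sq_le {κ : Type*} [Fintype κ] {e : κ → ι}
    (he : Injective e) {f g : κ → ℝ} (hfg : Monovary (extend e f 0) (extend e g 0))
    (u v : OrthonormalBasis ι ℝ E) :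
    ∑ i, ∑ j, f i * g j * ⟪u (e i), v (e j)⟫ ^ 2 ≤ ∑ i, f i * g i := by
  have hext : ∀ (h : κ → ℝ) a, a ∉ Set.range e → extend e h 0 a = 0 :=
    fun h a ha => extend_apply' _ _ _ ha
  calc ∑ i, ∑ j, f i * g j * ⟪u (e i), v (e j)⟫ ^ 2
      = ∑ a, ∑ b, extend e f 0 a * extend e g 0 b * ⟪u a, v b⟫ ^ 2 := by
        refine Fintype.sum_of_injective e he _ _ (fun a ha => by simp [hext f a ha]) fun i => ?_
        exact Fintype.sum_of_injective e he _ _ (fun b hb => by simp [hext g b hb])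
          fun j => by simp [he.extend_apply]
    _ ≤ ∑ a, extend e f 0 a * extend e g 0 a := u.sum_mul_mul_inner_sq_le hfg v
    _ = ∑ i, f i * g i := (Fintype.sum_of_injective e he _ _ (fun a ha => by simp [hext f a ha])
          fun i => by simp [he.extend_apply]).symm

theorem exists_orthonormalBasis_norm_smul_eq [FiniteDimensional ℝ E] {κ : Type*}
    (hcard : finrank ℝ E = Fintype.card ι) {w : κ → E} (hw : Pairwise fun i k => ⟪w i, w k⟫ = 0)
    {e : κ → ι} (he : Injective e) :
    ∃ v : OrthonormalBasis ι ℝ E, ∀ i, ‖w i‖ • v (e i) = w i := by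
  set s : Set ι := e '' {i | w i ≠ 0}
  have hv : Orthonormal ℝ (s.domRestrict (extend e (fun i => ‖w i‖⁻¹ • w i) 0)) := by
    refine ⟨?_, ?_⟩
    · rintro ⟨_, i, hi, rfl⟩
      simp [he.extend_apply, norm_smul, inv_mul_cancel₀ (norm_ne_zero_iff.2 hi)]
    · rintro ⟨_, i, hi, rfl⟩ ⟨_, k, hk, rfl⟩ hik
      have : i ≠ k := fun h => hik (by subst h; rfl)
      simp [he.extend_apply, real_inner_smul_left, real_inner_smul_right, hw this]
  obtain ⟨v, hv⟩ := hv.exists_orthonormalBasis_extension_of_card_eq hcard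
  refine ⟨v, fun i => ?_⟩
  by_cases hi : w i = 0
  · simp [hi]
  · rw [hv _ ⟨i, hi, rfl⟩, he.extend_apply, smul_smul,
      mul_inv_cancel₀ (norm_ne_zero_iff.2 hi), one_smul]

end OrthonormalBasis

theorem Antitone.extend_zero {α β γ : Type*} [LinearOrder α] [Preorder β] [Preorder γ] [Zero γ]
    {e : α → β} (he : StrictMono e) (hlow : IsLowerSet (Set.range e)) {f : α → γ}
    (hf : Antitone f) (hf0 : 0 ≤ f) : Antitone (extend e f 0) := by
  intro a b hab
  by_cases hb : ∃ y, e y = b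
  · obtain ⟨y, rfl⟩ := hb
    obtain ⟨x, rfl⟩ := hlow hab ⟨y, rfl⟩
    rw [he.injective.extend_apply, he.injective.extend_apply]
    exact hf (he.le_iff_le.1 hab)
  · rw [extend_apply' _ _ _ hb]
    by_cases ha : ∃ x, e x = a
    · obtain ⟨x, rfl⟩ := ha
      rw [he.injective.extend_apply]
      exact hf0 x
    · rw [extend_apply' _ _ _ ha]
      exact le_rfl

theorem dist_le_dist_of_norm_eq_of_inner_le {E F : Type*} [NormedAddCommGroup E]
    [InnerProductSpace ℝ E] [NormedAddCommGroup F] [InnerProductSpace ℝ F] {x y : E} {x' y' : F}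
    (hx : ‖x‖ = ‖x'‖) (hy : ‖y‖ = ‖y'‖) (h : ⟪x', y'⟫ ≤ ⟪x, y⟫) : dist x y ≤ dist x' y' := by
  rw [dist_eq_norm, dist_eq_norm, ← sq_le_sq₀ (norm_nonneg _) (norm_nonneg _),
    norm_sub_sq_real, norm_sub_sq_real, hx, hy]
  linarith

theorem inner_toLp_transpose_mulVec {m p : Type*} [Fintype m] [Fintype p] (X : Matrix m p ℝ)
    (x y : EuclideanSpace ℝ m) :
    ⟪(WithLp.toLp 2 (Xᵀ *ᵥ x) : EuclideanSpace ℝ p), WithLp.toLp 2 (Xᵀ *ᵥ y)⟫ =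
      ⟪x, WithLp.toLp 2 ((X * Xᵀ) *ᵥ y)⟫ := by
  simp only [EuclideanSpace.inner_eq_star_dotProduct, star_trivial]
  rw [dotProduct_mulVec, vecMul_transpose, mulVec_mulVec]

theorem sum_sum_mul_eq_sum_sum_inner_mul_inner {m p ι κ : Type*} [Fintype m] [Fintype p]
    [Fintype ι] [Fintype κ] {X Y : Matrix m p ℝ} {σ : ι → ℝ} {τ : κ → ℝ}
    {u : ι → EuclideanSpace ℝ m} {v : ι → EuclideanSpace ℝ p}
    {u' : κ → EuclideanSpace ℝ m} {v' : κ → EuclideanSpace ℝ p}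
    (hX : ∀ a c, X a c = ∑ i, σ i * u i a * v i c)
    (hY : ∀ a c, Y a c = ∑ k, τ k * u' k a * v' k c) :
    ∑ a, ∑ c, X a c * Y a c = ∑ i, ∑ k, σ i * τ k * (⟪u i, u' k⟫ * ⟪v i, v' k⟫) := by
  have hterm : ∀ i k, σ i * τ k * (⟪u i, u' k⟫ * ⟪v i, v' k⟫)
      = ∑ a, ∑ c, σ i * u i a * v i c * (τ k * u' k a * v' k c) := by
    intro i k
    simp only [EuclideanSpace.inner_eq_star_dotProduct, dotProduct, star_trivial]
    rw [Finset.sum_mul_sum, Finset.mul_sum]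
    refine Finset.sum_congr rfl fun _ _ => ?_
    rw [Finset.mul_sum]
    exact Finset.sum_congr rfl fun _ _ => by ring
  simp only [hterm, hX, hY, Finset.sum_mul_sum]
  simp_rw [Finset.sum_comm (s := (Finset.univ : Finset m)),
    Finset.sum_comm (s := (Finset.univ : Finset p))]

theorem inner_toEuc {n t : ℕ} (X Y : Matrix (Fin n) (Fin t) ℝ) :
    ⟪toEuc X, toEuc Y⟫ = ∑ i, ∑ j, X i j * Y i j := by
  simp [toEuc, EuclideanSpace.inner_eq_star_dotProduct, dotProduct, Fintype.sum_prod_type,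
    mul_comm]

section singvals

variable {n t : ℕ}

theorem singvals_nonneg (X : Matrix (Fin n) (Fin t) ℝ) : 0 ≤ (singvals X).ofLp :=
  fun _ => Real.sqrt_nonneg _

theorem singvals_antitone (X : Matrix (Fin n) (Fin t) ℝ) : Antitone (singvals X).ofLp :=
  fun _ _ hij => neg_le_neg_iff.1 <|
    Tuple.monotone_sort (fun j => -√((isHermitian_mul_conjTranspose_self X).eigenvalues j)) hij

theorem sum_singvals_sq (X : Matrix (Fin n) (Fin t) ℝ) :
    ∑ i, singvals X i ^ 2 = ∑ i, ∑ j, X i j ^ 2 := by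
  set hH := isHermitian_mul_conjTranspose_self X
  have hsq : ∀ j, √(hH.eigenvalues j) ^ 2 = hH.eigenvalues j :=
    fun j => Real.sq_sqrt ((posSemidef_self_mul_conjTranspose X).eigenvalues_nonneg j)
  calc ∑ i, singvals X i ^ 2 = ∑ j, hH.eigenvalues j := by
        simp only [singvals, hsq]
        exact Equiv.sum_comp _ _
    _ = (X * Xᴴ).trace := by rw [hH.trace_eq_sum_eigenvalues]; simp
    _ = ∑ i, ∑ j, X i j ^ 2 := by simp [trace, mul_apply, sq]

theorem norm_singvals (X : Matrix (Fin n) (Fin t) ℝ) : ‖singvals X‖ = ‖toEuc X‖ := by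
  rw [← sq_eq_sq₀ (norm_nonneg _) (norm_nonneg _), EuclideanSpace.norm_sq_eq,
    EuclideanSpace.norm_sq_eq]
  simp [sum_singvals_sq, toEuc, Fintype.sum_prod_type]

theorem exists_svd (hnt : n ≤ t) (X : Matrix (Fin n) (Fin t) ℝ) :
    ∃ (u : OrthonormalBasis (Fin n) ℝ (EuclideanSpace ℝ (Fin n)))
      (v : OrthonormalBasis (Fin t) ℝ (EuclideanSpace ℝ (Fin t))),
      ∀ a c, X a c = ∑ i, singvals X i * u i a * v (Fin.castLE hnt i) c := by
  set hH := isHermitian_mul_conjTranspose_self X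
  -- `u` lists eigenvectors of `XXᵀ` in the order of `singvals`; `v` extends the normalised `Xᵀuᵢ`.
  set p := Tuple.sort fun j => -√(hH.eigenvalues j)
  set u := hH.eigenvectorBasis.reindex p.symm
  set w : Fin n → EuclideanSpace ℝ (Fin t) := fun i => WithLp.toLp 2 (Xᵀ *ᵥ u i)
  have hw : ∀ i k, ⟪w i, w k⟫ = hH.eigenvalues (p k) * ⟪u i, u k⟫ := by
    intro i k
    simp only [w, inner_toLp_transpose_mulVec, u, OrthonormalBasis.reindex_apply, Equiv.symm_symm]
    rw [← conjTranspose_eq_transpose_of_trivial, hH.mulVec_eigenvectorBasis, WithLp.toLp_smul,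
      WithLp.toLp_ofLp, real_inner_smul_right]
  have hw_orth : Pairwise fun i k => ⟪w i, w k⟫ = 0 := fun i k hik => by
    show ⟪w i, w k⟫ = 0
    rw [hw, orthonormal_iff_ite.1 u.orthonormal, if_neg hik, mul_zero]
  have hw_norm : ∀ i, ‖w i‖ = singvals X i := fun i => by
    rw [norm_eq_sqrt_real_inner, hw, real_inner_self_eq_norm_sq, u.orthonormal.1, one_pow,
      mul_one]
    rfl
  obtain ⟨v, hv⟩ :=
    exists_orthonormalBasis_norm_smul_eq (by simp) hw_orth (Fin.castLE_injective hnt)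
  refine ⟨u, v, fun a c => ?_⟩
  have hcoef : ∀ i, ⟪u i, WithLp.toLp 2 fun d => X d c⟫ = singvals X i * v (Fin.castLE hnt i) c :=
    fun i => by
      rw [← hw_norm, ← smul_eq_mul, ← PiLp.smul_apply, hv]
      simp [w, EuclideanSpace.inner_eq_star_dotProduct, mulVec, dotProduct]
  have hcol := congr($(u.sum_repr' (WithLp.toLp 2 fun d => X d c)) a)
  simp only [WithLp.ofLp_sum, WithLp.ofLp_smul, Finset.sum_apply, Pi.smul_apply, smul_eq_mul,
    hcoef] at hcol
  rw [← hcol]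
  exact Finset.sum_congr rfl fun i _ => by ring

theorem sum_mul_le_sum_singvals_mul (hnt : n ≤ t) (X Y : Matrix (Fin n) (Fin t) ℝ) :
    ∑ i, ∑ j, X i j * Y i j ≤ ∑ i, singvals X i * singvals Y i := by
  obtain ⟨u, v, hX⟩ := exists_svd hnt X
  obtain ⟨u', v', hY⟩ := exists_svd hnt Y
  set σ := (singvals X).ofLp
  set τ := (singvals Y).ofLp
  set e := Fin.castLE hnt
  have hpad : ∀ {f : Fin n → ℝ}, Antitone f → 0 ≤ f → Antitone (extend e f 0) := fun hf hf0 =>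
    hf.extend_zero (Fin.strictMono_castLE hnt)
      (by rw [Fin.range_castLE]; exact fun _ _ hab hb => lt_of_le_of_lt (α := ℕ) hab hb) hf0
  have hU := u.sum_mul_mul_inner_sq_le ((singvals_antitone X).monovary (singvals_antitone Y)) u'
  have hV := v.sum_mul_mul_inner_comp_sq_le (Fin.castLE_injective hnt)
    ((hpad (singvals_antitone X) (singvals_nonneg X)).monovary
      (hpad (singvals_antitone Y) (singvals_nonneg Y))) v'
  rw [sum_sum_mul_eq_sum_sum_inner_mul_inner hX hY]
  calc ∑ i, ∑ k, σ i * τ k * (⟪u i, u' k⟫ * ⟪v (e i), v' (e k)⟫)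
      ≤ ∑ i, ∑ k, σ i * τ k * ((⟪u i, u' k⟫ ^ 2 + ⟪v (e i), v' (e k)⟫ ^ 2) / 2) := by
        gcongr with i _ k _
        · exact mul_nonneg (singvals_nonneg X i) (singvals_nonneg Y k)
        · linarith [two_mul_le_add_sq ⟪u i, u' k⟫ ⟪v (e i), v' (e k)⟫]
    _ = ((∑ i, ∑ k, σ i * τ k * ⟪u i, u' k⟫ ^ 2) +
          ∑ i, ∑ k, σ i * τ k * ⟪v (e i), v' (e k)⟫ ^ 2) / 2 := by
        simp only [mul_div_assoc', mul_add, add_div, Finset.sum_add_distrib, Finset.sum_div]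
    _ ≤ ∑ i, σ i * τ i := by linarith

end singvals

/-- von Neumann's trace inequality: `tr(XYᵀ) ≤ Σ σᵢ(X)σᵢ(Y)`, and
consequently `‖X − Y‖_F ≥ ‖σ(X) − σ(Y)‖`. -/
theorem von_neumann_trace_inequality {n t : ℕ} (hnt : n ≤ t)
    (X Y : Matrix (Fin n) (Fin t) ℝ) :
    ((∑ i, ∑ j, X i j * Y i j) ≤ ∑ i, singvals X i * singvals Y i) ∧
    dist (singvals X) (singvals Y) ≤ dist (toEuc X) (toEuc Y) := by
  have htrace := sum_mul_le_sum_singvals_mul hnt X Y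
  refine ⟨htrace, dist_le_dist_of_norm_eq_of_inner_le (norm_singvals X) (norm_singvals Y) ?_⟩
  rw [inner_toEuc]
  simpa [EuclideanSpace.inner_eq_star_dotProduct, dotProduct, mul_comm] using htrace
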